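/- arXiv:1302.7227 — 2 statements merged into one kernel-verified Lean document; each statement's English description precedes it below -/
import Mathlib

section
/- There exists a constant c > 0 such that for every integer N ≥ 1 and every ε ∈ (0, 1/2), F(N,ε) ≤ c · min(1, e^{N√(2ε)} - 1). -/
open Filter Real

/-- `F N ε = 1 - E[e^{-ε τ^N}]`, where `τ^N` is the hitting time of `0` by a
simple symmetric random walk on `{0,…,N}` started at `1` and reflected at `N`;
here `s = e^{-ε}` and `χ = (1 + √(1-s²))/s`. -/
noncomputable def combF (N : ℕ) (ε : ℝ) : ℝ :=
  let s : ℝ := Real.exp (-ε)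
  let χ : ℝ := (1 + Real.sqrt (1 - s ^ 2)) / s
  ((χ - 1) * χ ^ (2*N - 2) * (χ - s) + (1 - χ) * (s * χ - 1)) /
    (χ ^ (2*N - 1) * (χ - s) + (s * χ - 1))

/-!
With `r = √(1-s²)` the parameter `χ = (1+r)/s` satisfies `sχ - 1 = r` and `χ - s = rχ`, so the
common factor `r` cancels and `F(N,ε) = (χ-1)(χ^{2N-1}-1)/(χ^{2N}+1) ≤ χ - 1`. Since
`e^ε ≤ 1 + 2ε` and `r² = 1 - e^{-2ε} ≤ 2ε`, writing `q = √(2ε) < 1` gives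
`χ - 1 = e^ε(1+r) - 1 ≤ (1+q²)(1+q) - 1 ≤ 3q`, and `q ≤ min(1, e^{Nq} - 1)`.
-/

noncomputable def chi (s : ℝ) : ℝ := (1 + √(1 - s ^ 2)) / s

section chi

variable {s : ℝ}

lemma mul_chi (hs : s ≠ 0) : s * chi s = 1 + √(1 - s ^ 2) := by
  rw [chi]; field_simp

lemma chi_sub_self (hs : s ≠ 0) (hs1 : s ^ 2 ≤ 1) : chi s - s = √(1 - s ^ 2) * chi s := by
  have hr : √(1 - s ^ 2) ^ 2 = 1 - s ^ 2 := sq_sqrt (by linarith)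
  refine mul_left_cancel₀ hs ?_
  linear_combination (1 - √(1 - s ^ 2)) * mul_chi hs - hr

lemma one_lt_chi (hs0 : 0 < s) (hs1 : s < 1) : 1 < chi s := by
  rw [chi, one_lt_div hs0]
  have : 0 ≤ √(1 - s ^ 2) := sqrt_nonneg _
  linarith

lemma chi_exp_neg (ε : ℝ) : chi (exp (-ε)) = exp ε * (1 + √(1 - exp (-ε) ^ 2)) := by
  rw [chi, exp_neg, div_inv_eq_mul, mul_comm]

end chi

lemma combF_succ_eq {ε : ℝ} (hε : 0 < ε) (N : ℕ) :
    combF (N + 1) ε = (chi (exp (-ε)) - 1) * (chi (exp (-ε)) ^ (2 * N + 1) - 1) /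
      (chi (exp (-ε)) ^ (2 * N + 2) + 1) := by
  set s := exp (-ε)
  have hs0 : 0 < s := exp_pos _
  have hs1 : s < 1 := exp_lt_one_iff.mpr (neg_lt_zero.mpr hε)
  have hr : 0 < √(1 - s ^ 2) := sqrt_pos.mpr (by nlinarith)
  have hsub := chi_sub_self hs0.ne' (by nlinarith)
  have hmul : s * chi s - 1 = √(1 - s ^ 2) := by rw [mul_chi hs0.ne']; ring
  change ((chi s - 1) * chi s ^ (2 * (N + 1) - 2) * (chi s - s) + (1 - chi s) * (s * chi s - 1)) /
    (chi s ^ (2 * (N + 1) - 1) * (chi s - s) + (s * chi s - 1)) = _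
  rw [show 2 * (N + 1) - 2 = 2 * N by omega, show 2 * (N + 1) - 1 = 2 * N + 1 by omega,
    hsub, hmul, ← mul_div_mul_left (_ * _) _ hr.ne']
  congr 1 <;> ring

lemma mul_pow_sub_one_div_le {x : ℝ} (hx : 1 ≤ x) (n : ℕ) :
    (x - 1) * (x ^ (n + 1) - 1) / (x ^ (n + 2) + 1) ≤ x - 1 := by
  have hle : x ^ (n + 1) ≤ x ^ (n + 2) := pow_le_pow_right₀ hx (by omega)
  rw [mul_div_assoc]
  refine mul_le_of_le_one_right (by linarith) (div_le_one_of_le₀ (by linarith) ?_)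
  positivity

lemma combF_le_chi_sub_one {ε : ℝ} (hε : 0 < ε) {N : ℕ} (hN : 1 ≤ N) :
    combF N ε ≤ chi (exp (-ε)) - 1 := by
  obtain ⟨M, rfl⟩ : ∃ M, N = M + 1 := ⟨N - 1, by omega⟩
  rw [combF_succ_eq hε]
  exact mul_pow_sub_one_div_le
    (one_lt_chi (exp_pos _) (exp_lt_one_iff.mpr (neg_lt_zero.mpr hε))).le (2 * M)

lemma exp_le_one_add_two_mul {ε : ℝ} (hε0 : 0 ≤ ε) (hε : ε ≤ 1 / 2) : exp ε ≤ 1 + 2 * ε := by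
  calc exp ε ≤ 1 / (1 - ε) := exp_bound_div_one_sub_of_interval hε0 (by linarith)
    _ ≤ 1 + 2 * ε := by
      rw [div_le_iff₀ (by linarith)]
      nlinarith

lemma sqrt_one_sub_exp_neg_sq_le (ε : ℝ) : √(1 - exp (-ε) ^ 2) ≤ √(2 * ε) := by
  refine sqrt_le_sqrt ?_
  have := add_one_le_exp (-ε + -ε)
  rw [sq, ← exp_add]
  linarith

lemma chi_exp_neg_sub_one_le {ε : ℝ} (hε0 : 0 ≤ ε) (hε : ε ≤ 1 / 2) :
    chi (exp (-ε)) - 1 ≤ 3 * √(2 * ε) := by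
  set q := √(2 * ε)
  have hq2 : q ^ 2 = 2 * ε := sq_sqrt (by linarith)
  have hq0 : 0 ≤ q := sqrt_nonneg _
  have hq1 : q ≤ 1 := by nlinarith
  have hχ : chi (exp (-ε)) ≤ (1 + q ^ 2) * (1 + q) := by
    rw [chi_exp_neg, hq2]
    exact mul_le_mul (exp_le_one_add_two_mul hε0 hε)
      (by linarith [sqrt_one_sub_exp_neg_sq_le ε]) (by positivity) (by linarith)
  nlinarith

lemma le_exp_mul_sub_one {x n : ℝ} (hx : 0 ≤ x) (hn : 1 ≤ n) : x ≤ exp (n * x) - 1 := by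
  linarith [add_one_le_exp (n * x), le_mul_of_one_le_left hx hn]

/-- There is `c > 0` with `F(N,ε) ≤ c·min(1, e^{N√(2ε)} - 1)` for all `N ≥ 1`
and `ε ∈ (0, 1/2)`. -/
theorem stmt_5 :
    ∃ c : ℝ, 0 < c ∧ ∀ N : ℕ, 1 ≤ N → ∀ ε : ℝ, 0 < ε → ε < 1/2 →
      combF N ε ≤ c * min 1 (Real.exp (N * Real.sqrt (2 * ε)) - 1) := by
  refine ⟨3, by norm_num, fun N hN ε hε hε2 => ?_⟩
  have hq1 : √(2 * ε) ≤ 1 := sqrt_le_one.mpr (by linarith)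
  have hmin : √(2 * ε) ≤ min 1 (exp (N * √(2 * ε)) - 1) :=
    le_min hq1 (le_exp_mul_sub_one (sqrt_nonneg _) (by exact_mod_cast hN))
  calc combF N ε ≤ chi (exp (-ε)) - 1 := combF_le_chi_sub_one hε hN
    _ ≤ 3 * √(2 * ε) := chi_exp_neg_sub_one_le hε.le hε2.le
    _ ≤ 3 * min 1 (exp (N * √(2 * ε)) - 1) := by linarith
end

section
/- Let α ∈ (0,1). Then lim_{ε→0+} ε^{-(1+α)/2} · Σ_{N=1}^{∞} N^{-1-α} · F(N,ε) = 2^{(1+α)/2} · ∫₀^∞ y^{-1-α} tanh(y) dy, where the integral on the right-hand side is finite. -/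
/-!
Put `b = arcosh (exp ε)`, so that `χ = exp b` and `cosh b = exp ε`. For `N ≥ 1` this turns `F` into
`F(N, ε) = (1 - e^{-b}) tanh (N b) - 2 (e^ε - 1) / (χ^{2N} + 1)`, hence
`Σ N^{-1-α} F(N, ε) = (1 - e^{-b}) b^α · b Σ_{n ≥ 1} φ(n b) - O(e^ε - 1)`
with `φ y = y^{-1-α} tanh y`.
Since `φ` is antitone and integrable on `(0, ∞)`, the Riemann sum `b Σ φ(n b)` lies between
`∫_b^∞ φ` and `∫_0^∞ φ`, so it tends to `∫_0^∞ φ`. Finally `1 + b²/2 ≤ cosh b ≤ exp (b²/2)`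
gives `b² ~ 2ε`, so the weight is `~ (2ε)^{(1+α)/2}` while the remainder is `O(ε)`.
-/

open Filter Real MeasureTheory

open Set Topology

namespace Real

theorem hasDerivAt_tanh (x : ℝ) : HasDerivAt tanh (cosh x ^ 2)⁻¹ x := by
  have h := (hasDerivAt_sinh x).div (hasDerivAt_cosh x) (cosh_pos x).ne'
  rw [show sinh / cosh = tanh from funext fun y => (tanh_eq_sinh_div_cosh y).symm] at h
  rwa [← sq, ← sq, cosh_sq_sub_sinh_sq, one_div] at h

theorem continuous_tanh : Continuous tanh :=
  continuous_iff_continuousAt.2 fun x => (hasDerivAt_tanh x).continuousAt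

theorem tanh_nonneg {x : ℝ} (hx : 0 ≤ x) : 0 ≤ tanh x := by
  rw [tanh_eq_sinh_div_cosh]
  exact div_nonneg (sinh_nonneg_iff.2 hx) (cosh_pos x).le

theorem tanh_le_self {x : ℝ} (hx : 0 ≤ x) : tanh x ≤ x := by
  have hderiv : ∀ y, deriv tanh y ≤ 1 := fun y => by
    rw [(hasDerivAt_tanh y).deriv]
    exact inv_le_one_of_one_le₀ (one_le_pow₀ (one_le_cosh y))
  simpa using image_sub_le_mul_sub_of_deriv_le
    (fun y => (hasDerivAt_tanh y).differentiableAt) hderiv hx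

theorem one_add_sq_div_two_le_cosh (x : ℝ) : 1 + x ^ 2 / 2 ≤ cosh x := by
  have h := sum_le_hasSum (Finset.range 2)
    (fun n _ => div_nonneg ((even_two_mul n).pow_nonneg x) (by positivity)) (hasSum_cosh x)
  norm_num [Finset.sum_range_succ] at h
  linarith

theorem tendsto_exp_sub_one_div_nhdsGT :
    Tendsto (fun x => (exp x - 1) / x) (𝓝[>] 0) (𝓝 1) := by
  simpa [div_eq_inv_mul] using (hasDerivAt_exp 0).tendsto_slope_zero_right

end Real

theorem antitoneOn_rpow_mul_tanh {p : ℝ} (hp : p ≤ -1) :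
    AntitoneOn (fun y => y ^ p * tanh y) (Ioi 0) := by
  refine antitoneOn_of_hasDerivWithinAt_nonpos (convex_Ioi 0)
    (fun y hy => ((continuousAt_rpow_const y p (Or.inl (ne_of_gt hy))).mul
      continuous_tanh.continuousAt).continuousWithinAt)
    (fun y hy => ?_) (fun y hy => ?_)
    (f' := fun y => p * y ^ (p - 1) * tanh y + y ^ p * (cosh y ^ 2)⁻¹)
  · rw [interior_Ioi] at hy
    exact ((hasDerivAt_rpow_const (Or.inl (ne_of_gt hy))).mul
      (hasDerivAt_tanh y)).hasDerivWithinAt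
  · rw [interior_Ioi] at hy
    have hy : 0 < y := hy
    have hsinh : y ≤ sinh y * cosh y :=
      calc y ≤ sinh y := self_le_sinh_iff.2 hy.le
        _ ≤ sinh y * cosh y :=
          le_mul_of_one_le_right (sinh_nonneg_iff.2 hy.le) (one_le_cosh y)
    have hfactor : p * y ^ (p - 1) * tanh y + y ^ p * (cosh y ^ 2)⁻¹
        = y ^ p * (y⁻¹ * (cosh y ^ 2)⁻¹) * (p * (sinh y * cosh y) + y) := by
      rw [rpow_sub_one hy.ne', tanh_eq_sinh_div_cosh]
      field_simp
    rw [hfactor]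
    refine mul_nonpos_of_nonneg_of_nonpos (by positivity) ?_
    nlinarith [mul_nonneg (sinh_nonneg_iff.2 hy.le) (cosh_pos y).le]

theorem integrableOn_rpow_mul_tanh {p : ℝ} (hp₁ : -2 < p) (hp₂ : p < -1) :
    IntegrableOn (fun y => y ^ p * tanh y) (Ioi 0) := by
  have hmeas : ∀ s ⊆ Ioi (0 : ℝ), MeasurableSet s →
      AEStronglyMeasurable (fun y => y ^ p * tanh y) (volume.restrict s) :=
    fun s hs hsm => ((continuousOn_id.rpow_const fun y hy => Or.inl (ne_of_gt (hs hy))).mul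
      continuous_tanh.continuousOn).aestronglyMeasurable hsm
  have hnear : IntegrableOn (fun y => y ^ p * tanh y) (Ioc 0 1) := by
    have hdom : IntegrableOn (fun y : ℝ => y ^ (p + 1)) (Ioc 0 1) :=
      (intervalIntegrable_iff_integrableOn_Ioc_of_le zero_le_one).1
        (intervalIntegral.intervalIntegrable_rpow' (by linarith))
    refine hdom.mono' (hmeas _ Ioc_subset_Ioi_self measurableSet_Ioc) ?_
    filter_upwards [ae_restrict_mem measurableSet_Ioc] with y hy
    have hy : 0 < y := hy.1
    rw [norm_of_nonneg (mul_nonneg (rpow_nonneg hy.le _) (tanh_nonneg hy.le)),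
      rpow_add_one hy.ne']
    exact mul_le_mul_of_nonneg_left (tanh_le_self hy.le) (rpow_nonneg hy.le _)
  have hfar : IntegrableOn (fun y => y ^ p * tanh y) (Ioi 1) := by
    refine (integrableOn_Ioi_rpow_of_lt hp₂ one_pos).mono'
      (hmeas _ (Ioi_subset_Ioi zero_le_one) measurableSet_Ioi) ?_
    filter_upwards [ae_restrict_mem measurableSet_Ioi] with y hy
    have hy : (0 : ℝ) < y := zero_lt_one.trans hy
    rw [norm_of_nonneg (mul_nonneg (rpow_nonneg hy.le _) (tanh_nonneg hy.le))]
    exact mul_le_of_le_one_right (rpow_nonneg hy.le _) (tanh_lt_one y).le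
  rw [← Ioc_union_Ioi_eq_Ioi zero_le_one]
  exact hnear.union hfar

theorem hasSum_integral_Ioc_add_mul {E : Type*} [NormedAddCommGroup E] [NormedSpace ℝ E]
    {g : ℝ → E} {a h : ℝ} (hh : 0 < h) (hg : IntegrableOn g (Ioi a)) :
    HasSum (fun n : ℕ => ∫ x in Ioc (a + n * h) (a + (n + 1) * h), g x) (∫ x in Ioi a, g x) := by
  have hmono : Monotone fun n : ℕ => a + n * h := fun m n hmn => by
    dsimp only
    gcongr
  have hunbdd : ¬BddAbove (range fun n : ℕ => a + n * h) := by
    rintro ⟨M, hM⟩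
    obtain ⟨n, hn⟩ := exists_nat_gt ((M - a) / h)
    have := hM (mem_range_self n)
    rw [div_lt_iff₀ hh] at hn
    linarith
  have hunion : ⋃ n : ℕ, Ioc (a + n * h) (a + (n + 1) * h) = Ioi a := by
    simpa [Order.succ_eq_add_one] using
      iUnion_Ioc_map_succ_eq_Ioi (fun n => hmono (Nat.zero_le n)) hunbdd
  have hdisj := hmono.pairwise_disjoint_on_Ioc_succ
  simp only [Order.succ_eq_add_one, Nat.cast_add, Nat.cast_one] at hdisj
  rw [← hunion] at hg ⊢
  exact hasSum_integral_iUnion (fun n => measurableSet_Ioc) hdisj hg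

theorem tendsto_setIntegral_Ioi_nhdsGT {E : Type*} [NormedAddCommGroup E] [NormedSpace ℝ E]
    {g : ℝ → E} {a : ℝ} (hg : IntegrableOn g (Ioi a)) :
    Tendsto (fun h => ∫ x in Ioi h, g x) (𝓝[>] a) (𝓝 (∫ x in Ioi a, g x)) := by
  have hhead : Tendsto (fun h => ∫ x in Ioc a h, g x) (𝓝[>] a) (𝓝 0) := by
    have hcont := intervalIntegral.continuousOn_primitive (a := a) (b := a + 1)
      ((integrableOn_Icc_iff_integrableOn_Ioc).2 (hg.mono_set Ioc_subset_Ioi_self))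
      a (left_mem_Icc.2 (by linarith))
    have hfilter : 𝓝[>] a ≤ 𝓝[Icc a (a + 1)] a := by
      rw [← nhdsWithin_Ioo_eq_nhdsGT (show a < a + 1 by linarith)]
      exact nhdsWithin_mono _ Ioo_subset_Icc_self
    simpa using hcont.tendsto.mono_left hfilter
  have hlim := (tendsto_const_nhds (x := ∫ x in Ioi a, g x)).sub hhead
  rw [sub_zero] at hlim
  refine hlim.congr' ?_
  filter_upwards [self_mem_nhdsWithin] with h hh
  rw [sub_eq_iff_eq_add', ← setIntegral_union Ioc_disjoint_Ioi_same measurableSet_Ioi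
    (hg.mono_set Ioc_subset_Ioi_self) (hg.mono_set (Ioi_subset_Ioi (le_of_lt hh))),
    Ioc_union_Ioi_eq_Ioi (le_of_lt hh)]

namespace AntitoneOn

variable {f : ℝ → ℝ}

theorem sub_mul_le_integral_Ioc {x y : ℝ} (hxy : x < y) (hf : AntitoneOn f (Ioc x y))
    (hfi : IntegrableOn f (Ioc x y)) : (y - x) * f y ≤ ∫ t in Ioc x y, f t := by
  calc (y - x) * f y = ∫ _ in Ioc x y, f y := by
        rw [setIntegral_const, Real.volume_real_Ioc_of_le hxy.le, smul_eq_mul]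
    _ ≤ ∫ t in Ioc x y, f t :=
        setIntegral_mono_on (integrableOn_const measure_Ioc_lt_top.ne) hfi measurableSet_Ioc
          fun t ht => hf ht (right_mem_Ioc.2 hxy) ht.2

theorem integral_Ioc_le_sub_mul {x y : ℝ} (hxy : x ≤ y) (hf : AntitoneOn f (Icc x y))
    (hfi : IntegrableOn f (Ioc x y)) : ∫ t in Ioc x y, f t ≤ (y - x) * f x := by
  calc ∫ t in Ioc x y, f t ≤ ∫ _ in Ioc x y, f x :=
        setIntegral_mono_on hfi (integrableOn_const measure_Ioc_lt_top.ne) measurableSet_Ioc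
          fun t ht => hf (left_mem_Icc.2 hxy) (Ioc_subset_Icc_self ht) ht.1.le
    _ = (y - x) * f x := by
        rw [setIntegral_const, Real.volume_real_Ioc_of_le hxy, smul_eq_mul]

theorem integral_Ioi_le_mul_tsum_le (hf : AntitoneOn f (Ioi 0)) (hfi : IntegrableOn f (Ioi 0))
    {h : ℝ} (hh : 0 < h) :
    ∫ x in Ioi h, f x ≤ h * ∑' n : ℕ, f ((n + 1) * h) ∧
      h * ∑' n : ℕ, f ((n + 1) * h) ≤ ∫ x in Ioi 0, f x := by
  have hlower := hasSum_integral_Ioc_add_mul hh (hfi.mono_set (Ioi_subset_Ioi hh.le))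
  have hupper := hasSum_integral_Ioc_add_mul hh hfi
  have hle_lower : ∀ n : ℕ,
      ∫ x in Ioc (h + n * h) (h + (n + 1) * h), f x ≤ h * f ((n + 1) * h) := fun n => by
    have hpos : 0 < h + n * h := by positivity
    convert integral_Ioc_le_sub_mul (x := h + n * h) (y := h + (n + 1) * h) (by linarith)
      (hf.mono fun t ht => hpos.trans_le ht.1)
      (hfi.mono_set fun t ht => hpos.trans ht.1) using 1
    ring_nf
  have hle_upper : ∀ n : ℕ,
      h * f ((n + 1) * h) ≤ ∫ x in Ioc (0 + n * h) (0 + (n + 1) * h), f x := fun n => by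
    have hnonneg : 0 ≤ 0 + n * h := by positivity
    convert sub_mul_le_integral_Ioc (x := 0 + n * h) (y := 0 + (n + 1) * h) (by linarith)
      (hf.mono fun t ht => hnonneg.trans_lt ht.1)
      (hfi.mono_set fun t ht => hnonneg.trans_lt ht.1) using 1
    ring_nf
  have hsum : Summable fun n : ℕ => h * f ((n + 1) * h) := by
    have hgap := (hupper.summable.sub hlower.summable).of_nonneg_of_le
      (fun n => sub_nonneg.2 (hle_lower n)) (fun n => sub_le_sub_right (hle_upper n) _)
    simpa using hgap.add hlower.summable
  rw [← tsum_mul_left]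
  exact ⟨hasSum_le hle_lower hlower hsum.hasSum, hasSum_le hle_upper hsum.hasSum hupper⟩

theorem tendsto_mul_tsum (hf : AntitoneOn f (Ioi 0)) (hfi : IntegrableOn f (Ioi 0)) :
    Tendsto (fun h => h * ∑' n : ℕ, f ((n + 1) * h)) (𝓝[>] 0) (𝓝 (∫ x in Ioi 0, f x)) :=
  tendsto_of_tendsto_of_tendsto_of_le_of_le' (tendsto_setIntegral_Ioi_nhdsGT hfi)
    tendsto_const_nhds
    (eventually_nhdsWithin_of_forall fun _ hh => (integral_Ioi_le_mul_tsum_le hf hfi hh).1)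
    (eventually_nhdsWithin_of_forall fun _ hh => (integral_Ioi_le_mul_tsum_le hf hfi hh).2)

end AntitoneOn

theorem div_exp_neg_eq_exp_arcosh {ε : ℝ} (hε : 0 ≤ ε) :
    (1 + √(1 - exp (-ε) ^ 2)) / exp (-ε) = exp (arcosh (exp ε)) := by
  rw [exp_arcosh (one_le_exp hε), add_div, ← sqrt_sq (exp_pos (-ε)).le, ← sqrt_div' _ (sq_nonneg _),
    sqrt_sq (exp_pos (-ε)).le, exp_neg, one_div, inv_inv, sub_div, div_self (by positivity),
    div_eq_mul_inv, one_mul, ← inv_pow, inv_inv]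

theorem combF_eq {ε : ℝ} (hε : 0 < ε) {N : ℕ} (hN : N ≠ 0) :
    combF N ε = (1 - exp (-arcosh (exp ε))) * tanh (N * arcosh (exp ε))
      - 2 * (exp ε - 1) / (exp (arcosh (exp ε)) ^ (2 * N) + 1) := by
  obtain ⟨M, rfl⟩ := Nat.exists_eq_succ_of_ne_zero hN
  have hχ_eq := div_exp_neg_eq_exp_arcosh hε.le
  have hcosh := cosh_arcosh (one_le_exp hε.le)
  have hb := arcosh_pos (one_lt_exp_iff.2 hε)
  generalize arcosh (exp ε) = b at hχ_eq hcosh hb ⊢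
  set χ := exp b with hχ_def
  have hχ : 1 < χ := one_lt_exp_iff.2 hb
  have hχ0 : 0 < χ := zero_lt_one.trans hχ
  rw [cosh_eq, exp_neg, ← hχ_def] at hcosh
  have hs : exp (-ε) = 2 * χ / (χ ^ 2 + 1) := by
    rw [exp_neg, ← hcosh]
    field_simp
  have hsχ : exp (-ε) * χ - 1 = (χ ^ 2 - 1) / (χ ^ 2 + 1) := by
    rw [hs]; field_simp; ring
  have hχs : χ - exp (-ε) = χ * ((χ ^ 2 - 1) / (χ ^ 2 + 1)) := by
    rw [hs]; field_simp; ring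
  have hu : 0 < (χ ^ 2 - 1) / (χ ^ 2 + 1) := by
    apply div_pos <;> nlinarith
  have htanh : tanh ((M + 1 : ℕ) * b) = (χ ^ (2 * (M + 1)) - 1) / (χ ^ (2 * (M + 1)) + 1) := by
    rw [tanh_eq, exp_neg, exp_nat_mul, pow_mul', ← hχ_def]
    field_simp
  simp only [combF]
  rw [hχ_eq, hsχ, hχs, htanh, ← hcosh, exp_neg, ← hχ_def,
    show 2 * (M + 1) - 2 = 2 * M by omega, show 2 * (M + 1) - 1 = 2 * M + 1 by omega]
  -- `u = tanh b` is a common factor of the numerator and the denominator of `combF`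
  set u := (χ ^ 2 - 1) / (χ ^ 2 + 1)
  field_simp
  ring

theorem two_mul_le_sq_arcosh_exp {ε : ℝ} (hε : 0 ≤ ε) : 2 * ε ≤ arcosh (exp ε) ^ 2 := by
  have h := cosh_le_exp_half_sq (arcosh (exp ε))
  rw [cosh_arcosh (one_le_exp hε), exp_le_exp] at h
  linarith

theorem sq_arcosh_exp_le {ε : ℝ} (hε : 0 ≤ ε) : arcosh (exp ε) ^ 2 ≤ 2 * (exp ε - 1) := by
  have h := one_add_sq_div_two_le_cosh (arcosh (exp ε))
  rw [cosh_arcosh (one_le_exp hε)] at h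
  linarith

theorem tendsto_sq_arcosh_exp_div :
    Tendsto (fun ε => arcosh (exp ε) ^ 2 / ε) (𝓝[>] 0) (𝓝 2) := by
  have hupper := tendsto_exp_sub_one_div_nhdsGT.const_mul 2
  rw [mul_one] at hupper
  refine tendsto_of_tendsto_of_tendsto_of_le_of_le' tendsto_const_nhds hupper
    (eventually_nhdsWithin_of_forall fun ε (hε : 0 < ε) => ?_)
    (eventually_nhdsWithin_of_forall fun ε (hε : 0 < ε) => ?_)
  · rw [le_div_iff₀ hε]
    exact two_mul_le_sq_arcosh_exp hε.le
  · rw [← mul_div_assoc]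
    exact div_le_div_of_nonneg_right (sq_arcosh_exp_le hε.le) hε.le

theorem tendsto_arcosh_exp_nhdsGT :
    Tendsto (fun ε => arcosh (exp ε)) (𝓝[>] 0) (𝓝[>] 0) := by
  refine tendsto_nhdsWithin_iff.2 ⟨?_, eventually_nhdsWithin_of_forall
    fun ε (hε : 0 < ε) => arcosh_pos (one_lt_exp_iff.2 hε)⟩
  have hsq := (tendsto_sq_arcosh_exp_div.mul
    (tendsto_nhdsWithin_of_tendsto_nhds (tendsto_id (x := 𝓝 (0 : ℝ))))).sqrt
  simp only [id, mul_zero, sqrt_zero] at hsq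
  refine hsq.congr' (eventually_nhdsWithin_of_forall fun ε (hε : 0 < ε) => ?_)
  rw [div_mul_cancel₀ _ hε.ne', sqrt_sq (arcosh_nonneg (one_le_exp hε.le))]

theorem tendsto_one_sub_exp_neg_div_nhdsGT :
    Tendsto (fun x => (1 - exp (-x)) / x) (𝓝[>] 0) (𝓝 1) := by
  have hexp : Tendsto (fun x => exp (-x)) (𝓝[>] 0) (𝓝 1) := by
    have hcont : Continuous fun x : ℝ => exp (-x) := by fun_prop
    simpa using tendsto_nhdsWithin_of_tendsto_nhds (hcont.tendsto 0)
  have h := hexp.mul tendsto_exp_sub_one_div_nhdsGT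
  rw [one_mul] at h
  refine h.congr fun x => ?_
  rw [mul_div_assoc', mul_sub, ← exp_add, neg_add_cancel, exp_zero, mul_one]

section CombSeries

variable {p : ℝ}

theorem summable_add_one_rpow (hp : p < -1) : Summable fun n : ℕ => ((n : ℝ) + 1) ^ p := by
  simpa using (summable_nat_add_iff 1).2 (summable_nat_rpow.2 hp)

theorem add_one_rpow_div_mem_Icc (n : ℕ) (x : ℝ) :
    ((n : ℝ) + 1) ^ p / (x ^ (2 * (n + 1)) + 1) ∈ Icc 0 (((n : ℝ) + 1) ^ p) := by
  have hpow : 0 ≤ x ^ (2 * (n + 1)) := (even_two_mul _).pow_nonneg x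
  have hrpow : 0 ≤ ((n : ℝ) + 1) ^ p := by positivity
  exact ⟨by positivity, div_le_self hrpow (by linarith)⟩

theorem summable_add_one_rpow_div (hp : p < -1) (x : ℝ) :
    Summable fun n : ℕ => ((n : ℝ) + 1) ^ p / (x ^ (2 * (n + 1)) + 1) :=
  (summable_add_one_rpow hp).of_nonneg_of_le (fun n => (add_one_rpow_div_mem_Icc n x).1)
    fun n => (add_one_rpow_div_mem_Icc n x).2

theorem norm_tsum_add_one_rpow_div_le (hp : p < -1) (x : ℝ) :
    ‖∑' n : ℕ, ((n : ℝ) + 1) ^ p / (x ^ (2 * (n + 1)) + 1)‖ ≤ ∑' n : ℕ, ((n : ℝ) + 1) ^ p := by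
  rw [norm_of_nonneg (tsum_nonneg fun n => (add_one_rpow_div_mem_Icc n x).1)]
  exact (summable_add_one_rpow_div hp x).tsum_le_tsum (fun n => (add_one_rpow_div_mem_Icc n x).2)
    (summable_add_one_rpow hp)

theorem tsum_rpow_mul_combF_eq (hp : p < -1) {ε : ℝ} (hε : 0 < ε) :
    ∑' N : ℕ, (N : ℝ) ^ p * combF N ε =
      (1 - exp (-arcosh (exp ε))) * arcosh (exp ε) ^ (-1 - p) *
          (arcosh (exp ε) * ∑' n : ℕ,
            ((n + 1) * arcosh (exp ε)) ^ p * tanh ((n + 1) * arcosh (exp ε)))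
        - 2 * (exp ε - 1) *
          ∑' n : ℕ, ((n : ℝ) + 1) ^ p / (exp (arcosh (exp ε)) ^ (2 * (n + 1)) + 1) := by
  have hb := arcosh_pos (one_lt_exp_iff.2 hε)
  have hF := fun n : ℕ => combF_eq hε (Nat.add_one_ne_zero n)
  set b := arcosh (exp ε)
  have htanh : Summable fun n : ℕ => ((n : ℝ) + 1) ^ p * tanh ((n + 1) * b) :=
    (summable_add_one_rpow hp).of_nonneg_of_le (fun n => by
      have := tanh_nonneg (x := (n + 1) * b) (by positivity); positivity)
      fun n => mul_le_of_le_one_right (by positivity) (tanh_lt_one _).le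
  have hrescale : ∀ n : ℕ, ((n : ℝ) + 1) ^ p * tanh ((n + 1) * b) =
      b ^ (-1 - p) * (b * (((n + 1) * b) ^ p * tanh ((n + 1) * b))) := fun n => by
    rw [mul_rpow (by positivity) hb.le, ← mul_assoc, ← rpow_add_one hb.ne',
      show -1 - p + 1 = -p by ring, rpow_neg hb.le]
    field_simp
  have hterm : ∀ n : ℕ, ((n + 1 : ℕ) : ℝ) ^ p * combF (n + 1) ε =
      (1 - exp (-b)) * (((n : ℝ) + 1) ^ p * tanh ((n + 1) * b))
        - 2 * (exp ε - 1) * (((n : ℝ) + 1) ^ p / (exp b ^ (2 * (n + 1)) + 1)) := fun n => by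
    rw [hF n]
    push_cast
    ring
  rw [tsum_eq_zero_add' ((htanh.mul_left _).sub ((summable_add_one_rpow_div hp _).mul_left _)
      |>.congr fun n => (hterm n).symm),
    Nat.cast_zero, zero_rpow (by linarith), zero_mul, zero_add, tsum_congr hterm,
    (htanh.mul_left _).tsum_sub ((summable_add_one_rpow_div hp _).mul_left _),
    tsum_mul_left, tsum_mul_left, tsum_congr hrescale, tsum_mul_left, tsum_mul_left]
  ring

theorem tendsto_mul_tsum_add_one_rpow_div {q : ℝ} (hp : p < -1) (hq : 0 < q) (x : ℝ → ℝ) :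
    Tendsto (fun ε => 2 * ((exp ε - 1) / ε) * ε ^ q *
      ∑' n : ℕ, ((n : ℝ) + 1) ^ p / (x ε ^ (2 * (n + 1)) + 1)) (𝓝[>] 0) (𝓝 0) := by
  have hpow : Tendsto (fun ε : ℝ => ε ^ q) (𝓝[>] 0) (𝓝 0) :=
    (tendsto_nhdsWithin_of_tendsto_nhds tendsto_id).rpow_const_nhds_zero hq
  have h := (tendsto_exp_sub_one_div_nhdsGT.const_mul 2).mul hpow
  rw [mul_zero] at h
  exact h.zero_mul_isBoundedUnder_le
    (isBoundedUnder_of ⟨_, fun ε => norm_tsum_add_one_rpow_div_le hp (x ε)⟩)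

end CombSeries

theorem rpow_mul_tsum_combF_eq {α ε : ℝ} (hα : 0 < α) (hε : 0 < ε) :
    ε ^ (-(1 + α) / 2) * ∑' N : ℕ, (N : ℝ) ^ (-1 - α) * combF N ε =
      (1 - exp (-arcosh (exp ε))) / arcosh (exp ε) * (arcosh (exp ε) ^ 2 / ε) ^ ((1 + α) / 2) *
          (arcosh (exp ε) * ∑' n : ℕ,
            ((n + 1) * arcosh (exp ε)) ^ (-1 - α) * tanh ((n + 1) * arcosh (exp ε)))
        - 2 * ((exp ε - 1) / ε) * ε ^ ((1 - α) / 2) *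
          ∑' n : ℕ, ((n : ℝ) + 1) ^ (-1 - α) / (exp (arcosh (exp ε)) ^ (2 * (n + 1)) + 1) := by
  have hb := arcosh_pos (one_lt_exp_iff.2 hε)
  rw [tsum_rpow_mul_combF_eq (by linarith) hε]
  set b := arcosh (exp ε)
  have hscale : (b ^ 2 / ε) ^ ((1 + α) / 2) = b * b ^ α * ε ^ (-(1 + α) / 2) := by
    rw [div_rpow (sq_nonneg b) hε.le, ← rpow_natCast, ← rpow_mul hb.le, div_eq_mul_inv,
      ← rpow_neg hε.le, ← rpow_one_add' hb.le (by linarith)]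
    ring_nf
  have hsplit : ε ^ (-(1 + α) / 2) = ε⁻¹ * ε ^ ((1 - α) / 2) := by
    rw [← rpow_neg_one, ← rpow_add hε]
    ring_nf
  rw [hscale, hsplit, show -1 - (-1 - α) = α by ring]
  field_simp

/-- Regular variation with index `(1+α)/2` of `Γ(ε) = Σ_{N≥1} N^{-1-α} F(N,ε)`
for the undrifted comb model:
`ε^{-(1+α)/2} Σ_{N=1}^∞ N^{-1-α} F(N,ε) → 2^{(1+α)/2} ∫₀^∞ y^{-1-α} tanh y dy`,
the latter integral being finite.  (The `N = 0` term of the `tsum` vanishes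
since `(0:ℝ)^{-1-α} = 0`.) -/
theorem stmt_12 (α : ℝ) (hα : α ∈ Set.Ioo (0:ℝ) 1) :
    IntegrableOn (fun y : ℝ => y ^ (-1 - α) * Real.tanh y) (Set.Ioi 0) volume ∧
      Tendsto (fun ε : ℝ =>
          ε ^ (-(1 + α) / 2) * ∑' N : ℕ, (N : ℝ) ^ (-1 - α) * combF N ε)
        (nhdsWithin 0 (Set.Ioi 0))
        (nhds ((2:ℝ) ^ ((1 + α) / 2) *
          ∫ y in Set.Ioi (0:ℝ), y ^ (-1 - α) * Real.tanh y)) := by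
  obtain ⟨hα₀, hα₁⟩ := hα
  have hp : -1 - α < -1 := by linarith
  have hint := integrableOn_rpow_mul_tanh (by linarith) hp
  refine ⟨hint, ?_⟩
  have hb := tendsto_arcosh_exp_nhdsGT
  have hmain := ((tendsto_one_sub_exp_neg_div_nhdsGT.comp hb).mul
    (tendsto_sq_arcosh_exp_div.rpow_const (Or.inl two_ne_zero) (p := (1 + α) / 2))).mul
    (((antitoneOn_rpow_mul_tanh hp.le).tendsto_mul_tsum hint).comp hb)
  have hlim := hmain.sub (tendsto_mul_tsum_add_one_rpow_div hp (q := (1 - α) / 2)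
    (by linarith) fun ε => exp (arcosh (exp ε)))
  rw [one_mul, sub_zero] at hlim
  exact hlim.congr' (eventually_nhdsWithin_of_forall fun ε (hε : 0 < ε) =>
    (rpow_mul_tsum_combF_eq hα₀ hε).symm)
end
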